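/- Lower incomplete moments of the GLMGA distribution: for all σ > 0, a > 0, b > 0, every real r > 0 with rσ < 1/2, and every u > 0, ∫_0^u y^r f_{σ,a,b}(y) dy = [(2b)^{-σr} B(1/2 − rσ, a + rσ)/B(1/2,a)] · ( 1 − I_{1/2−rσ, a+rσ}( u^{-1/σ}/(u^{-1/σ} + 2b) ) ). -/

import Mathlib

/-!
With `m = 1/2 - rσ`, `n = a + rσ` and the substitution `v(y) = (1 + 2b y^(1/σ))⁻¹`, which decreases
from `1` at `y = 0`, one has `y^r f(y) = -(2b)^(-σr) / B(a, 1/2) · v^(m-1) (1-v)^(n-1) · v'(y)`.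
So `Φ(y) = (2b)^(-σr) / B(a, 1/2) · ∫_{v(y)}^1 t^(m-1) (1-t)^(n-1) dt` is a primitive of `y^r f(y)`
on `(0, u)`, continuous on `[0, u]` with `Φ(0) = 0`. Its derivative is nonnegative, hence
integrable, and the fundamental theorem of calculus gives `∫_0^u y^r f(y) dy = Φ(u)`.
-/

open MeasureTheory Real Filter Topology

/-- The (real) beta function `B(m,n) = ∫_0^1 t^(m-1) (1-t)^(n-1) dt`. -/
noncomputable def betaFn (m n : ℝ) : ℝ :=
  ∫ t in (0:ℝ)..1, t ^ (m - 1) * (1 - t) ^ (n - 1)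

/-- The regularized incomplete beta function `I_{m,n}(v)`. -/
noncomputable def regIncBeta (m n v : ℝ) : ℝ :=
  (∫ t in (0:ℝ)..v, t ^ (m - 1) * (1 - t) ^ (n - 1)) / betaFn m n

/-- The GLMGA density `f_{σ,a,b}`. -/
noncomputable def glmga (σ a b y : ℝ) : ℝ :=
  (2 * b) ^ a / (σ * betaFn a (1 / 2)) * y ^ (-(1 / (2 * σ) + 1))
    / (y ^ (-1 / σ) + 2 * b) ^ (a + 1 / 2)

open Set

section Beta
variable {m n : ℝ}

lemma ofReal_betaKernel {t : ℝ} (ht : t ∈ Icc (0:ℝ) 1) :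
    ((t ^ (m - 1) * (1 - t) ^ (n - 1) : ℝ) : ℂ) =
      (t : ℂ) ^ ((m : ℂ) - 1) * (1 - (t : ℂ)) ^ ((n : ℂ) - 1) := by
  rw [Complex.ofReal_mul, Complex.ofReal_cpow ht.1, Complex.ofReal_cpow (sub_nonneg.2 ht.2)]
  push_cast
  rfl

lemma ofReal_betaFn (m n : ℝ) : (betaFn m n : ℂ) = Complex.betaIntegral m n := by
  rw [betaFn, ← intervalIntegral.integral_ofReal]
  refine intervalIntegral.integral_congr fun t ht => ?_
  exact ofReal_betaKernel (by rwa [uIcc_of_le zero_le_one] at ht)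

lemma betaFn_comm (m n : ℝ) : betaFn m n = betaFn n m := by
  exact_mod_cast (ofReal_betaFn m n).trans
    ((Complex.betaIntegral_symm _ _).symm.trans (ofReal_betaFn n m).symm)

lemma betaFn_eq_beta (hm : 0 < m) (hn : 0 < n) : betaFn m n = ProbabilityTheory.beta m n := by
  rw [ProbabilityTheory.beta_eq_betaIntegralReal m n hm hn, ← ofReal_betaFn, Complex.ofReal_re]

lemma betaFn_pos (hm : 0 < m) (hn : 0 < n) : 0 < betaFn m n :=
  betaFn_eq_beta hm hn ▸ ProbabilityTheory.beta_pos hm hn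

lemma intervalIntegrable_betaKernel (hm : 0 < m) (hn : 0 < n) :
    IntervalIntegrable (fun t : ℝ => t ^ (m - 1) * (1 - t) ^ (n - 1)) volume 0 1 := by
  refine (Complex.betaIntegral_convergent (u := m) (v := n) (by simpa) (by simpa)).norm.congr
    fun t ht => ?_
  rw [uIoc_of_le zero_le_one] at ht
  have ht' : t ∈ Icc (0:ℝ) 1 := ⟨ht.1.le, ht.2⟩
  rw [← ofReal_betaKernel ht', Complex.norm_real, Real.norm_of_nonneg]
  exact mul_nonneg (rpow_nonneg ht'.1 _) (rpow_nonneg (sub_nonneg.2 ht'.2) _)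

end Beta

noncomputable def incBeta (m n v : ℝ) : ℝ :=
  ∫ t in (0:ℝ)..v, t ^ (m - 1) * (1 - t) ^ (n - 1)

section IncBeta
variable {m n : ℝ}

lemma incBeta_one (m n : ℝ) : incBeta m n 1 = betaFn m n := rfl

lemma regIncBeta_eq (m n v : ℝ) : regIncBeta m n v = incBeta m n v / betaFn m n := rfl

lemma hasDerivAt_incBeta (hm : 0 < m) (hn : 0 < n) {v : ℝ} (hv : v ∈ Ioo (0:ℝ) 1) :
    HasDerivAt (incBeta m n) (v ^ (m - 1) * (1 - v) ^ (n - 1)) v := by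
  have hcont : ContinuousOn (fun t : ℝ => t ^ (m - 1) * (1 - t) ^ (n - 1)) (Ioo 0 1) :=
    fun t ht => ((continuousAt_rpow_const _ _ (Or.inl ht.1.ne')).mul
      ((continuousAt_rpow_const _ _ (Or.inl (sub_pos.2 ht.2).ne')).comp
        (continuousAt_const.sub continuousAt_id))).continuousWithinAt
  refine intervalIntegral.integral_hasDerivAt_right
    ((intervalIntegrable_betaKernel hm hn).mono_set ?_)
    (hcont.stronglyMeasurableAtFilter isOpen_Ioo v hv)
    (hcont.continuousAt (isOpen_Ioo.mem_nhds hv))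
  rw [uIcc_of_le zero_le_one, uIcc_of_le hv.1.le]
  exact Icc_subset_Icc_right hv.2.le

lemma continuousOn_incBeta (hm : 0 < m) (hn : 0 < n) : ContinuousOn (incBeta m n) (Icc 0 1) := by
  have := intervalIntegral.continuousOn_primitive_interval' (intervalIntegrable_betaKernel hm hn)
    left_mem_uIcc
  rwa [uIcc_of_le zero_le_one] at this

end IncBeta

/-- Equal to `y ^ (-1 / σ) / (y ^ (-1 / σ) + 2 * b)` for `y > 0`, but written so that it is
continuous on `[0, ∞)` with value `1` at `0`, where that form has the junk value `0`. -/
noncomputable def glmgaToBeta (σ b y : ℝ) : ℝ := (1 + 2 * b * y ^ (1 / σ))⁻¹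

section GLMGA
variable {σ a b y : ℝ}

lemma div_add_eq_glmgaToBeta (hy : 0 < y) :
    y ^ (-1 / σ) / (y ^ (-1 / σ) + 2 * b) = glmgaToBeta σ b y := by
  have hw : y ^ (-1 / σ) = (y ^ (1 / σ))⁻¹ := by rw [neg_div, rpow_neg hy.le]
  have hw0 : y ^ (1 / σ) ≠ 0 := (rpow_pos_of_pos hy _).ne'
  rw [glmgaToBeta, hw]
  field_simp

lemma glmgaToBeta_zero (hσ : σ ≠ 0) (b : ℝ) : glmgaToBeta σ b 0 = 1 := by
  rw [glmgaToBeta, zero_rpow (one_div_ne_zero hσ)]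
  norm_num

lemma glmgaToBeta_mem_Ioo (hb : 0 < b) (hy : 0 < y) : glmgaToBeta σ b y ∈ Ioo 0 1 := by
  have : 0 < 2 * b * y ^ (1 / σ) := by positivity
  exact ⟨by unfold glmgaToBeta; positivity, inv_lt_one_of_one_lt₀ (by linarith)⟩

lemma glmgaToBeta_mem_Icc (hb : 0 ≤ b) (hy : 0 ≤ y) : glmgaToBeta σ b y ∈ Icc 0 1 := by
  have : 0 ≤ 2 * b * y ^ (1 / σ) := by positivity
  exact ⟨by unfold glmgaToBeta; positivity, inv_le_one_of_one_le₀ (by linarith)⟩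

lemma continuousOn_glmgaToBeta (hσ : 0 < σ) (hb : 0 ≤ b) :
    ContinuousOn (glmgaToBeta σ b) (Ici 0) :=
  ContinuousOn.inv₀ (Continuous.continuousOn (by fun_prop (disch := positivity))) fun y hy => by
    have : 0 ≤ 2 * b * y ^ (1 / σ) := mul_nonneg (by positivity) (rpow_nonneg hy _)
    positivity

lemma hasDerivAt_glmgaToBeta (hb : 0 ≤ b) (hy : 0 < y) : HasDerivAt (glmgaToBeta σ b)
    (-(2 * b * (1 / σ * y ^ (1 / σ - 1))) / (1 + 2 * b * y ^ (1 / σ)) ^ 2) y := by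
  have : 0 ≤ 2 * b * y ^ (1 / σ) := by positivity
  exact (((hasDerivAt_rpow_const (Or.inl hy.ne')).const_mul (2 * b)).const_add 1).inv
    (by positivity)

lemma betaKernel_glmgaToBeta (m n : ℝ) (hb : 0 ≤ b) (hy : 0 < y) :
    glmgaToBeta σ b y ^ (m - 1) * (1 - glmgaToBeta σ b y) ^ (n - 1) =
      (2 * b) ^ (n - 1) * y ^ ((n - 1) / σ) * (1 + 2 * b * y ^ (1 / σ)) ^ (2 - (m + n)) := by
  set s := 1 + 2 * b * y ^ (1 / σ)
  have hs : 0 < s := by positivity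
  have h1 : 1 - s⁻¹ = 2 * b * y ^ (1 / σ) * s⁻¹ := by field_simp; ring
  have h2 : s ^ (2 - (m + n)) = s ^ (-(m - 1)) * s ^ (-(n - 1)) := by
    rw [← rpow_add hs]; ring_nf
  rw [glmgaToBeta, h1, mul_rpow (by positivity) (by positivity), mul_rpow (by positivity)
    (by positivity), inv_rpow hs.le, inv_rpow hs.le, ← rpow_neg hs.le, ← rpow_neg hs.le,
    ← rpow_mul hy.le, h2, one_div_mul_eq_div]
  ring

lemma hasDerivAt_incBeta_glmgaToBeta {m n : ℝ} (hm : 0 < m) (hn : 0 < n) (hb : 0 < b)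
    (hy : 0 < y) : HasDerivAt (fun y => incBeta m n (glmgaToBeta σ b y))
      (-((2 * b) ^ n / σ * y ^ (n / σ - 1) * (1 + 2 * b * y ^ (1 / σ)) ^ (-(m + n)))) y := by
  refine ((hasDerivAt_incBeta hm hn (glmgaToBeta_mem_Ioo hb hy)).comp y
    (hasDerivAt_glmgaToBeta hb.le hy)).congr_deriv ?_
  set s := 1 + 2 * b * y ^ (1 / σ)
  have hs : 0 < s := by positivity
  have hy' : y ^ (n / σ - 1) = y ^ ((n - 1) / σ) * y ^ (1 / σ - 1) := by
    rw [← rpow_add hy]; ring_nf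
  rw [betaKernel_glmgaToBeta m n hb.le hy, rpow_sub_one (by positivity), rpow_sub hs, rpow_two,
    rpow_neg hs.le, hy']
  field_simp

lemma glmga_eq (hb : 0 ≤ b) (hy : 0 < y) :
    glmga σ a b y = (2 * b) ^ a / (σ * betaFn a (1 / 2)) * y ^ (a / σ - 1) *
      (1 + 2 * b * y ^ (1 / σ)) ^ (-(a + 1 / 2)) := by
  have hsplit : y ^ (-1 / σ) + 2 * b = y ^ (-1 / σ) * (1 + 2 * b * y ^ (1 / σ)) := by
    rw [mul_add, mul_one, ← mul_assoc, mul_comm _ (2 * b), mul_assoc, ← rpow_add hy, neg_div,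
      neg_add_cancel, rpow_zero, mul_one]
  have hs : 0 ≤ 2 * b * y ^ (1 / σ) := by positivity
  rw [glmga, hsplit, mul_rpow (rpow_nonneg hy.le _) (by positivity), ← rpow_mul hy.le,
    rpow_neg (by positivity : (0:ℝ) ≤ 1 + 2 * b * y ^ (1 / σ)), ← div_div,
    mul_div_assoc, ← rpow_sub hy, div_eq_mul_inv]
  congr 3
  ring

lemma rpow_mul_glmga_eq (hσ : σ ≠ 0) (hb : 0 < b) (hy : 0 < y) (r : ℝ) :
    y ^ r * glmga σ a b y = (2 * b) ^ (-(σ * r)) / betaFn a (1 / 2) *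
      ((2 * b) ^ (a + r * σ) / σ * y ^ ((a + r * σ) / σ - 1) *
        (1 + 2 * b * y ^ (1 / σ)) ^ (-(a + 1 / 2))) := by
  have hb' : (2 * b) ^ a = (2 * b) ^ (-(σ * r)) * (2 * b) ^ (a + r * σ) := by
    rw [← rpow_add (by positivity)]; ring_nf
  have hy' : y ^ ((a + r * σ) / σ - 1) = y ^ r * y ^ (a / σ - 1) := by
    rw [← rpow_add hy]; congr 1; field_simp; ring
  rw [glmga_eq hb.le hy, hb', hy']
  ring

lemma glmga_nonneg (hσ : 0 < σ) (ha : 0 < a) (hb : 0 ≤ b) (hy : 0 < y) :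
    0 ≤ glmga σ a b y := by
  have := betaFn_pos ha one_half_pos
  rw [glmga_eq hb hy]
  positivity

end GLMGA

/-- lower incomplete moments of the GLMGA distribution. -/
theorem glmga_lower_incomplete_moment (σ a b r u : ℝ) (hσ : 0 < σ) (ha : 0 < a)
    (hb : 0 < b) (hr : 0 < r) (hrσ : r * σ < 1 / 2) (hu : 0 < u) :
    ∫ y in (0:ℝ)..u, y ^ r * glmga σ a b y
      = (2 * b) ^ (-(σ * r)) * betaFn (1 / 2 - r * σ) (a + r * σ) / betaFn (1 / 2) a *
        (1 - regIncBeta (1 / 2 - r * σ) (a + r * σ)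
            (u ^ (-1 / σ) / (u ^ (-1 / σ) + 2 * b))) := by
  have hm : 0 < 1 / 2 - r * σ := by linarith
  have hn : 0 < a + r * σ := by positivity
  set Φ : ℝ → ℝ := fun y => (2 * b) ^ (-(σ * r)) / betaFn a (1 / 2) *
    (betaFn (1 / 2 - r * σ) (a + r * σ) -
      incBeta (1 / 2 - r * σ) (a + r * σ) (glmgaToBeta σ b y))
  have hderiv : ∀ y ∈ Ioo 0 u, HasDerivAt Φ (y ^ r * glmga σ a b y) y := fun y hy => by
    refine (((hasDerivAt_incBeta_glmgaToBeta hm hn hb hy.1).const_sub _).const_mul _).congr_deriv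
      ?_
    rw [rpow_mul_glmga_eq hσ.ne' hb hy.1, show 1 / 2 - r * σ + (a + r * σ) = a + 1 / 2 by ring]
    ring
  have hcont : ContinuousOn Φ (Icc 0 u) :=
    continuousOn_const.mul (continuousOn_const.sub ((continuousOn_incBeta hm hn).comp
      ((continuousOn_glmgaToBeta hσ hb.le).mono Icc_subset_Ici_self)
      fun y hy => glmgaToBeta_mem_Icc hb.le hy.1))
  have hint : IntervalIntegrable (fun y => y ^ r * glmga σ a b y) volume 0 u :=
    (intervalIntegrable_iff_integrableOn_Ioc_of_le hu.le).2 <|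
      intervalIntegral.integrableOn_deriv_of_nonneg hcont hderiv fun y hy =>
        mul_nonneg (rpow_nonneg hy.1.le _) (glmga_nonneg hσ ha hb.le hy.1)
  rw [intervalIntegral.integral_eq_sub_of_hasDerivAt_of_le hu.le hcont hderiv hint]
  have hB := betaFn_pos hm hn
  simp only [Φ, glmgaToBeta_zero hσ.ne', incBeta_one, sub_self, mul_zero, sub_zero, regIncBeta_eq,
    div_add_eq_glmgaToBeta hu, betaFn_comm (1 / 2) a]
  generalize betaFn (1 / 2 - r * σ) (a + r * σ) = B at hB ⊢
  field_simp
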